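/- Suppose p ∈ ℝ, q ∈ ℂ with p²+|q|²=1, and a : ℤ → ℝ, b : ℤ → ℂ with a(x)²+|b(x)|²=1 are step functions: a(x) = a₊, b(x) = b₊ for x ≥ 0 and a(x) = a₋, b(x) = b₋ for x ≤ −1, where a±²+|b±|²=1. Let Q_{ε,+} := (i/2)[(1+p)e^{iθ}Lb − (1−p)e^{−iθ}b*L* + |q|(a(·+1)+a)] on ℓ²(ℤ), and let F±(z) := (i/2){(1+p)e^{iθ}b± z − (1−p)e^{−iθ}conj(b±) conj(z) + 2|q|a±}. Then (Q_{ε,+} − A(F₋, F₊))|x⟩ = 0 for every x ≠ −1; in particular Q_{ε,+} − A(F₋, F₊) is a finite-rank operator. -/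

import Mathlib

noncomputable section
open Complex ContinuousLinearMap Filter
open scoped ENNReal ComplexConjugate

/-- The Hilbert space `ℓ²(ℤ)`. -/
abbrev l2Z : Type := lp (fun _ : ℤ => ℂ) 2

lemma memℓp_comp_equiv (e : ℤ ≃ ℤ) {f : ℤ → ℂ} (hf : Memℓp f 2) :
    Memℓp (fun x => f (e x)) 2 := by
  apply memℓp_gen
  have h := hf.summable (by norm_num : (0:ℝ) < (2 : ℝ≥0∞).toReal)
  exact e.summable_iff.mpr h

/-- The left shift `(Lψ)(x) = ψ(x+1)` as a linear isometry equivalence of `ℓ²(ℤ)`. -/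
def shiftL : l2Z ≃ₗᵢ[ℂ] l2Z where
  toFun ψ := ⟨fun x => ψ (x + 1), memℓp_comp_equiv (Equiv.addRight 1) (lp.memℓp ψ)⟩
  invFun ψ := ⟨fun x => ψ (x - 1), memℓp_comp_equiv (Equiv.subRight 1) (lp.memℓp ψ)⟩
  map_add' ψ φ := rfl
  map_smul' c ψ := rfl
  left_inv ψ := by ext x; simp
  right_inv ψ := by ext x; simp
  norm_map' ψ := by
    have h2 : (0:ℝ) < (2 : ℝ≥0∞).toReal := by norm_num
    rw [lp.norm_eq_tsum_rpow h2, lp.norm_eq_tsum_rpow h2]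
    congr 1
    exact (Equiv.addRight (1:ℤ)).tsum_eq (fun x => ‖ψ x‖ ^ (2 : ℝ≥0∞).toReal)

/-- The left shift `L` on `ℓ²(ℤ)` as a continuous linear map. -/
def Lop : l2Z →L[ℂ] l2Z := shiftL.toLinearIsometry.toContinuousLinearMap

lemma norm_mul_le_of_le_one {c : ℤ → ℂ} (hc : ∀ x, ‖c x‖ ≤ 1) (f : ℤ → ℂ) (x : ℤ) :
    ‖c x * f x‖ ≤ ‖f x‖ := by
  calc ‖c x * f x‖ = ‖c x‖ * ‖f x‖ := norm_mul _ _
    _ ≤ 1 * ‖f x‖ := mul_le_mul_of_nonneg_right (hc x) (norm_nonneg _)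
    _ = ‖f x‖ := one_mul _

lemma memℓp_mul {c : ℤ → ℂ} (hc : ∀ x, ‖c x‖ ≤ 1) {f : ℤ → ℂ} (hf : Memℓp f 2) :
    Memℓp (fun x => c x * f x) 2 := by
  apply memℓp_gen
  have h := hf.summable (by norm_num : (0:ℝ) < (2 : ℝ≥0∞).toReal)
  apply h.of_nonneg_of_le (fun x => by positivity)
  intro x
  exact Real.rpow_le_rpow (norm_nonneg _) (norm_mul_le_of_le_one hc f x) (by norm_num)

/-- The multiplication operator on `ℓ²(ℤ)` by a function `c : ℤ → ℂ` with `‖c x‖ ≤ 1`. -/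
def mulOp (c : ℤ → ℂ) (hc : ∀ x, ‖c x‖ ≤ 1) : l2Z →L[ℂ] l2Z := by
  refine LinearMap.mkContinuous
    { toFun := fun ψ => ⟨fun x => c x * ψ x, memℓp_mul hc (lp.memℓp ψ)⟩
      map_add' := fun ψ φ => by ext x; simp [mul_add]; rfl
      map_smul' := fun a ψ => by ext x; simp; ring } 1 (fun ψ => ?_)
  rw [one_mul]
  have h2 : (0:ℝ) < (2 : ℝ≥0∞).toReal := by norm_num
  rw [lp.norm_eq_tsum_rpow h2, lp.norm_eq_tsum_rpow h2]
  apply Real.rpow_le_rpow (tsum_nonneg (fun x => by positivity))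
  · apply Summable.tsum_le_tsum
    · intro x
      exact Real.rpow_le_rpow (norm_nonneg _) (norm_mul_le_of_le_one hc _ x) (by norm_num)
    · exact (memℓp_mul hc (lp.memℓp ψ)).summable h2
    · exact (lp.memℓp ψ).summable h2
  · positivity

lemma normA_le_one {a : ℤ → ℝ} {b : ℤ → ℂ} (hab : ∀ x, (a x)^2 + ‖b x‖^2 = 1) (x : ℤ) :
    ‖((a x : ℂ))‖ ≤ 1 := by
  rw [Complex.norm_real, Real.norm_eq_abs]
  nlinarith [hab x, norm_nonneg (b x), abs_nonneg (a x), _root_.sq_abs (a x), sq_nonneg (‖b x‖)]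

lemma normB_le_one {a : ℤ → ℝ} {b : ℤ → ℂ} (hab : ∀ x, (a x)^2 + ‖b x‖^2 = 1) (x : ℤ) :
    ‖b x‖ ≤ 1 := by
  nlinarith [hab x, norm_nonneg (b x), sq_nonneg (a x)]

/-- `θ := arg q` if `q ≠ 0` and `θ := 0` if `q = 0`. -/
def theta (q : ℂ) : ℝ := if q = 0 then 0 else q.arg

/-- The operator `Q_{ε,+} = (i/2)[(1+p)e^{iθ}Lb - (1-p)e^{-iθ}b*L* + |q|(a(·+1)+a)]`
on `ℓ²(ℤ)`. -/
def Qep (p : ℝ) (q : ℂ) (a : ℤ → ℝ) (b : ℤ → ℂ) (hab : ∀ x, (a x)^2 + ‖b x‖^2 = 1) :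
    l2Z →L[ℂ] l2Z :=
  (I / 2 : ℂ) •
    (((1 + (p:ℂ)) * Complex.exp (theta q * I)) • (Lop ∘L mulOp b (normB_le_one hab))
      - ((1 - (p:ℂ)) * Complex.exp (-(theta q * I))) •
          (mulOp (fun x => conj (b x))
              (fun x => by rw [RCLike.norm_conj]; exact normB_le_one hab x)
            ∘L ContinuousLinearMap.adjoint Lop)
      + (‖q‖ : ℂ) • (mulOp (fun x => (a (x + 1) : ℂ)) (fun x => normA_le_one hab (x + 1))
          + mulOp (fun x => (a x : ℂ)) (normA_le_one hab)))

/-- The closed subspace of `ℓ²(ℤ)` spanned by the basis vectors `|x⟩` for `x ≥ 0`. -/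
def spanGe : Submodule ℂ l2Z :=
  (Submodule.span ℂ {v : l2Z | ∃ x : ℤ, 0 ≤ x ∧ v = lp.single 2 x 1}).topologicalClosure

/-- The closed subspace of `ℓ²(ℤ)` spanned by the basis vectors `|x⟩` for `x ≤ -1`. -/
def spanLe : Submodule ℂ l2Z :=
  (Submodule.span ℂ {v : l2Z | ∃ x : ℤ, x ≤ -1 ∧ v = lp.single 2 x 1}).topologicalClosure

instance : CompleteSpace spanGe := (Submodule.isClosed_topologicalClosure _).completeSpace_coe
instance : CompleteSpace spanLe := (Submodule.isClosed_topologicalClosure _).completeSpace_coe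

/-- The orthogonal projection `P_{≥0}` of `ℓ²(ℤ)` onto the closed span of `{|x⟩ : x ≥ 0}`. -/
def Pge : l2Z →L[ℂ] l2Z := spanGe.subtypeL ∘L (spanGe.orthogonalProjectionOnto)

/-- The orthogonal projection `P_{≤-1}` of `ℓ²(ℤ)` onto the closed span of `{|x⟩ : x ≤ -1}`. -/
def Ple : l2Z →L[ℂ] l2Z := spanLe.subtypeL ∘L (spanLe.orthogonalProjectionOnto)

/-- The operator `F(L) = αL + βL* + γ·1` associated with the degree-one Laurent symbol
`F(z) = (i/2){(1+p)e^{iθ}b₀ z - (1-p)e^{-iθ}conj(b₀) conj(z) + 2|q|a₀}`. -/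
def FopL (p : ℝ) (q : ℂ) (aInf : ℝ) (bInf : ℂ) : l2Z →L[ℂ] l2Z :=
  ((I / 2) * ((1 + (p:ℂ)) * Complex.exp (theta q * I) * bInf)) • Lop
    - ((I / 2) * ((1 - (p:ℂ)) * Complex.exp (-(theta q * I)) * (conj bInf))) •
        ContinuousLinearMap.adjoint Lop
    + ((I / 2) * (2 * (‖q‖:ℂ) * (aInf:ℂ))) • (1 : l2Z →L[ℂ] l2Z)

open scoped ComplexInnerProductSpace

/-! ### Auxiliary lemmas -/

lemma single_app (x y : ℤ) : (lp.single 2 x (1:ℂ) : l2Z) y = if y = x then 1 else 0 := by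
  rw [lp.single_apply]
  split_ifs with h <;> simp [h]

lemma Lop_apply (ψ : l2Z) (y : ℤ) : Lop ψ y = ψ (y + 1) := rfl

lemma Lop_single (x : ℤ) : Lop (lp.single 2 x (1:ℂ)) = lp.single 2 (x - 1) 1 := by
  apply lp.ext; funext y
  rw [Lop_apply, single_app, single_app]
  congr 1
  simp only [eq_iff_iff]
  omega

def Rop : l2Z →L[ℂ] l2Z := shiftL.symm.toLinearIsometry.toContinuousLinearMap

lemma adjoint_Lop : ContinuousLinearMap.adjoint Lop = Rop := by
  symm
  rw [ContinuousLinearMap.eq_adjoint_iff]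
  intro ψ φ
  have h1 : Lop φ = shiftL φ := rfl
  have h2 : (Rop ψ : l2Z) = shiftL.symm ψ := rfl
  rw [h1, h2, ← shiftL.inner_map_map (shiftL.symm ψ) φ, shiftL.apply_symm_apply]

lemma Rop_apply (ψ : l2Z) (y : ℤ) : Rop ψ y = ψ (y - 1) := rfl

lemma Rop_single (x : ℤ) : Rop (lp.single 2 x (1:ℂ)) = lp.single 2 (x + 1) 1 := by
  apply lp.ext; funext y
  rw [Rop_apply, single_app, single_app]
  congr 1
  simp only [eq_iff_iff]
  omega

lemma mulOp_apply (c : ℤ → ℂ) (hc : ∀ x, ‖c x‖ ≤ 1) (ψ : l2Z) (y : ℤ) :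
    mulOp c hc ψ y = c y * ψ y := rfl

lemma mulOp_single (c : ℤ → ℂ) (hc : ∀ x, ‖c x‖ ≤ 1) (x : ℤ) :
    mulOp c hc (lp.single 2 x (1:ℂ)) = c x • lp.single 2 x 1 := by
  apply lp.ext; funext y
  rw [mulOp_apply]
  have : (c x • lp.single 2 x (1:ℂ) : l2Z) y = c x • (lp.single 2 x (1:ℂ) : l2Z) y := rfl
  rw [this, single_app]
  by_cases h : y = x <;> simp [h]

lemma single_mem_spanGe {x : ℤ} (hx : 0 ≤ x) : lp.single 2 x (1:ℂ) ∈ spanGe :=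
  Submodule.le_topologicalClosure _ (Submodule.subset_span ⟨x, hx, rfl⟩)

lemma single_mem_spanLe {x : ℤ} (hx : x ≤ -1) : lp.single 2 x (1:ℂ) ∈ spanLe :=
  Submodule.le_topologicalClosure _ (Submodule.subset_span ⟨x, hx, rfl⟩)

lemma mem_orth_of_single (S : Set l2Z) (x : ℤ)
    (hS : ∀ v ∈ S, ⟪lp.single 2 x (1:ℂ), v⟫ = 0) :
    lp.single 2 x (1:ℂ) ∈ ((Submodule.span ℂ S).topologicalClosure)ᗮ := by
  rw [Submodule.mem_orthogonal]
  intro u hu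
  rw [inner_eq_zero_symm]
  have hle : (Submodule.span ℂ S).topologicalClosure ≤
      LinearMap.ker ((innerSL ℂ (lp.single 2 x (1:ℂ)) : l2Z →L[ℂ] ℂ) : l2Z →ₗ[ℂ] ℂ) := by
    apply Submodule.topologicalClosure_minimal
    · rw [Submodule.span_le]
      intro v hv
      simpa using hS v hv
    · exact ContinuousLinearMap.isClosed_ker _
  simpa using hle hu

lemma Pge_single_of_nonneg {x : ℤ} (hx : 0 ≤ x) :
    Pge (lp.single 2 x (1:ℂ)) = lp.single 2 x 1 :=
  Submodule.starProjection_eq_self_iff.mpr (single_mem_spanGe hx)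

lemma Ple_single_of_nonneg {x : ℤ} (hx : 0 ≤ x) :
    Ple (lp.single 2 x (1:ℂ)) = 0 := by
  have hmem : lp.single 2 x (1:ℂ) ∈ spanLeᗮ := by
    apply mem_orth_of_single
    rintro v ⟨y, hy, rfl⟩
    rw [lp.inner_single_left]
    have : (lp.single 2 y (1:ℂ) : l2Z) x = 0 := by rw [single_app]; exact if_neg (by omega)
    simpa using this
  show (↑(spanLe.orthogonalProjectionOnto (lp.single 2 x (1:ℂ))) : l2Z) = 0
  rw [Submodule.orthogonalProjectionOnto_apply_of_mem_orthogonal hmem]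
  rfl

lemma Ple_single_of_le {x : ℤ} (hx : x ≤ -1) :
    Ple (lp.single 2 x (1:ℂ)) = lp.single 2 x 1 :=
  Submodule.starProjection_eq_self_iff.mpr (single_mem_spanLe hx)

lemma Pge_single_of_le {x : ℤ} (hx : x ≤ -1) :
    Pge (lp.single 2 x (1:ℂ)) = 0 := by
  have hmem : lp.single 2 x (1:ℂ) ∈ spanGeᗮ := by
    apply mem_orth_of_single
    rintro v ⟨y, hy, rfl⟩
    rw [lp.inner_single_left]
    have : (lp.single 2 y (1:ℂ) : l2Z) x = 0 := by rw [single_app]; exact if_neg (by omega)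
    simpa using this
  show (↑(spanGe.orthogonalProjectionOnto (lp.single 2 x (1:ℂ))) : l2Z) = 0
  rw [Submodule.orthogonalProjectionOnto_apply_of_mem_orthogonal hmem]
  rfl

lemma FopL_single (p : ℝ) (q : ℂ) (a0 : ℝ) (b0 : ℂ) (x : ℤ) :
    FopL p q a0 b0 (lp.single 2 x (1:ℂ)) =
      ((I / 2) * ((1 + (p:ℂ)) * Complex.exp (theta q * I) * b0)) • lp.single 2 (x-1) 1
      - ((I / 2) * ((1 - (p:ℂ)) * Complex.exp (-(theta q * I)) * (conj b0))) •
          lp.single 2 (x+1) 1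
      + ((I / 2) * (2 * (‖q‖:ℂ) * (a0:ℂ))) • lp.single 2 x 1 := by
  simp only [FopL, ContinuousLinearMap.add_apply, ContinuousLinearMap.sub_apply,
    ContinuousLinearMap.smul_apply, ContinuousLinearMap.one_apply, adjoint_Lop,
    Lop_single, Rop_single]

lemma Qep_single (p : ℝ) (q : ℂ) (a : ℤ → ℝ) (b : ℤ → ℂ)
    (hab : ∀ x, (a x)^2 + ‖b x‖^2 = 1) (x : ℤ) :
    Qep p q a b hab (lp.single 2 x (1:ℂ)) =
      (I/2 : ℂ) • ((((1 + (p:ℂ)) * Complex.exp (theta q * I)) * b x) • lp.single 2 (x-1) 1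
        - (((1 - (p:ℂ)) * Complex.exp (-(theta q * I))) * conj (b (x+1))) •
            lp.single 2 (x+1) 1
        + ((‖q‖:ℂ) * ((a (x+1) : ℂ) + (a x : ℂ))) • lp.single 2 x 1) := by
  simp only [Qep, ContinuousLinearMap.smul_apply, ContinuousLinearMap.add_apply,
    ContinuousLinearMap.sub_apply, ContinuousLinearMap.comp_apply, adjoint_Lop,
    mulOp_single, Rop_single, map_smul, Lop_single]
  module


/-- **`Q_{ε,+}` differs from `A(F₋,F₊)` by a finite-rank operator (step coins).**  If `a`, `b`
are step functions with values `a₊, b₊` on `x ≥ 0` and `a₋, b₋` on `x ≤ -1`, then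
`Q_{ε,+} - A(F₋,F₊)` kills every basis vector `|x⟩` with `x ≠ -1`; in particular it has
finite rank.  Here `A(F₋,F₊) = F₊(L)P_{≥0} + F₋(L)P_{≤-1}`. -/
theorem Qep_sub_Aop_finiteRank (p : ℝ) (q : ℂ) (hpq : p ^ 2 + ‖q‖ ^ 2 = 1)
    (a : ℤ → ℝ) (b : ℤ → ℂ) (hab : ∀ x, (a x) ^ 2 + ‖b x‖ ^ 2 = 1)
    (ap am : ℝ) (bp bm : ℂ)
    (hstepP : ∀ x : ℤ, 0 ≤ x → a x = ap ∧ b x = bp)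
    (hstepM : ∀ x : ℤ, x ≤ -1 → a x = am ∧ b x = bm) :
    (∀ x : ℤ, x ≠ -1 →
      (Qep p q a b hab - (FopL p q ap bp ∘L Pge + FopL p q am bm ∘L Ple))
        (lp.single 2 x 1) = 0) ∧
    FiniteDimensional ℂ (LinearMap.range
      ((Qep p q a b hab - (FopL p q ap bp ∘L Pge + FopL p q am bm ∘L Ple)) : l2Z →ₗ[ℂ] l2Z)) := by
  set T := Qep p q a b hab - (FopL p q ap bp ∘L Pge + FopL p q am bm ∘L Ple) with hT
  have h1 : ∀ x : ℤ, x ≠ -1 → T (lp.single 2 x 1) = 0 := by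
    intro x hx
    rw [hT, ContinuousLinearMap.sub_apply, ContinuousLinearMap.add_apply,
      ContinuousLinearMap.comp_apply, ContinuousLinearMap.comp_apply]
    rcases le_or_gt 0 x with hx0 | hx0
    · rw [Pge_single_of_nonneg hx0, Ple_single_of_nonneg hx0, map_zero, add_zero,
        Qep_single, FopL_single]
      obtain ⟨ha1, hb1⟩ := hstepP x hx0
      obtain ⟨ha2, hb2⟩ := hstepP (x+1) (by omega)
      rw [ha1, hb1, ha2, hb2, sub_eq_zero]
      module
    · rw [Pge_single_of_le (by omega), Ple_single_of_le (by omega), map_zero, zero_add,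
        Qep_single, FopL_single]
      obtain ⟨ha1, hb1⟩ := hstepM x (by omega)
      obtain ⟨ha2, hb2⟩ := hstepM (x+1) (by omega)
      rw [ha1, hb1, ha2, hb2, sub_eq_zero]
      module
  refine ⟨h1, ?_⟩
  set w := T (lp.single 2 (-1) (1:ℂ)) with hw
  set S : l2Z →L[ℂ] l2Z := (innerSL ℂ (lp.single 2 (-1) (1:ℂ))).smulRight w with hS
  have hdense :
      Dense ((Submodule.span ℂ (Set.range (fun x : ℤ => lp.single 2 x (1:ℂ)))) : Set l2Z) := by
    rw [Submodule.dense_iff_topologicalClosure_eq_top,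
      Submodule.topologicalClosure_eq_top_iff, Submodule.eq_bot_iff]
    intro u hu
    apply lp.ext; funext x
    have h := (Submodule.mem_orthogonal _ u).mp hu (lp.single 2 x 1)
      (Submodule.subset_span ⟨x, rfl⟩)
    rw [lp.inner_single_left] at h
    simpa using h
  have heq : (T : l2Z → l2Z) = S := by
    apply Continuous.ext_on hdense T.continuous S.continuous
    intro v hv
    induction hv using Submodule.span_induction with
    | mem v hv =>
      obtain ⟨x, rfl⟩ := hv
      by_cases hx : x = -1
      · subst hx
        rw [hS, ContinuousLinearMap.smulRight_apply, innerSL_apply_apply, lp.inner_single_left]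
        simp [single_app, ← hw]
      · rw [h1 x hx, hS, ContinuousLinearMap.smulRight_apply, innerSL_apply_apply,
          lp.inner_single_left, single_app, if_neg (Ne.symm hx)]
        simp
    | zero => simp
    | add u v hu hv ihu ihv => simp [map_add, ihu, ihv]
    | smul c u hu ihu => simp [map_smul, ihu]
  have hrange : LinearMap.range (T : l2Z →ₗ[ℂ] l2Z) ≤ Submodule.span ℂ {w} := by
    rintro v ⟨ψ, rfl⟩
    have h : (T : l2Z →ₗ[ℂ] l2Z) ψ = S ψ := congrFun heq ψ
    rw [h, ContinuousLinearMap.smulRight_apply]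
    exact Submodule.smul_mem _ _ (Submodule.mem_span_singleton_self w)
  exact Submodule.finiteDimensional_of_le hrange
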